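/- Let f be a geometric mapping whose deformation relation is L̄^i_{jk} = L^i_{jk} + ω̄^i_{jk} − ω^i_{jk} as in the context. Then the Weyl-type object W̃^{(s)i}_{jmn} := R^i_{jmn} − δ^i_j(ζ^{(s)}_{mn} − ζ^{(s)}_{nm}) − δ^i_mζ^{(s)}_{jn} + δ^i_nζ^{(s)}_{jm} + D^i_{jmn} − D^i_{jnm} is an invariant of f; that is, for all indices and every point of ℝ^N, R̄^i_{jmn} − δ^i_j(ζ̄^{(s)}_{mn} − ζ̄^{(s)}_{nm}) − δ^i_mζ̄^{(s)}_{jn} + δ^i_nζ̄^{(s)}_{jm} + D̄^i_{jmn} − D̄^i_{jnm} = R^i_{jmn} − δ^i_j(ζ^{(s)}_{mn} − ζ^{(s)}_{nm}) − δ^i_mζ^{(s)}_{jn} + δ^i_nζ^{(s)}_{jm} + D^i_{jmn} − D^i_{jnm}. -/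

import Mathlib

open scoped BigOperators

namespace PaperInv

variable {N : ℕ}

/-- Partial derivative in the `k`-th coordinate direction. -/
noncomputable def pd (k : Fin N) (f : (Fin N → ℝ) → ℝ) (x : Fin N → ℝ) : ℝ :=
  fderiv ℝ f x (Pi.single k 1)

/-- Kronecker delta. -/
noncomputable def kd (i j : Fin N) : ℝ := if i = j then 1 else 0

/-- Curvature tensor of a symmetric affine connection `L`. -/
noncomputable def curv (L : Fin N → Fin N → Fin N → (Fin N → ℝ) → ℝ)
    (i j m n : Fin N) (x : Fin N → ℝ) : ℝ :=
  pd n (L i j m) x - pd m (L i j n) x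
    + (∑ α, L α j m x * L i α n x) - (∑ α, L α j n x * L i α m x)

/-- Ricci contraction `R_{jm} = R^α_{jmα}`. -/
noncomputable def ricci (L : Fin N → Fin N → Fin N → (Fin N → ℝ) → ℝ)
    (j m : Fin N) (x : Fin N → ℝ) : ℝ :=
  ∑ α, curv L α j m α x

/-- Covariant derivative of a 1-form with respect to `L`. -/
noncomputable def cov1 (L : Fin N → Fin N → Fin N → (Fin N → ℝ) → ℝ)
    (ρ : Fin N → (Fin N → ℝ) → ℝ) (i j : Fin N) (x : Fin N → ℝ) : ℝ :=
  pd j (ρ i) x - ∑ α, L α i j x * ρ α x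

/-- Covariant derivative of a type (1,2) tensor with respect to `L`. -/
noncomputable def cov12 (L : Fin N → Fin N → Fin N → (Fin N → ℝ) → ℝ)
    (a : Fin N → Fin N → Fin N → (Fin N → ℝ) → ℝ)
    (i j m n : Fin N) (x : Fin N → ℝ) : ℝ :=
  pd n (a i j m) x + (∑ α, L i α n x * a α j m x)
    - (∑ α, L α j n x * a i α m x) - (∑ α, L α m n x * a i j α x)

/-- The deformation object
`ω^i_{jk} = s₁(δ^i_jρ_k + δ^i_kρ_j) + s₂(F^i_jσ_k + F^i_kσ_j) + s₃σ_{jk}φ^i`. -/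
noncomputable def omg (s1 s2 s3 : ℝ) (ρ σ : Fin N → (Fin N → ℝ) → ℝ)
    (F : Fin N → Fin N → (Fin N → ℝ) → ℝ)
    (σ2 : Fin N → Fin N → (Fin N → ℝ) → ℝ)
    (φ : Fin N → (Fin N → ℝ) → ℝ) (i j k : Fin N) (x : Fin N → ℝ) : ℝ :=
  s1 * (kd i j * ρ k x + kd i k * ρ j x)
    + s2 * (F i j x * σ k x + F i k x * σ j x) + s3 * σ2 j k x * φ i x

/-- The object `ζ^{(s)}_{ij}`. -/
noncomputable def zeta (L : Fin N → Fin N → Fin N → (Fin N → ℝ) → ℝ)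
    (s1 s2 s3 : ℝ) (ρ σ : Fin N → (Fin N → ℝ) → ℝ)
    (F : Fin N → Fin N → (Fin N → ℝ) → ℝ)
    (σ2 : Fin N → Fin N → (Fin N → ℝ) → ℝ)
    (φ : Fin N → (Fin N → ℝ) → ℝ) (i j : Fin N) (x : Fin N → ℝ) : ℝ :=
  s1 * cov1 L ρ i j x + s1 ^ 2 * ρ i x * ρ j x
    + s1 * s2 * (∑ α, (F α i x * σ j x + F α j x * σ i x) * ρ α x)
    + s1 * s3 * σ2 i j x * (∑ α, ρ α x * φ α x)

/-- The object `D̃^{(s₂)(s₃)i}_{jmn}`. -/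
noncomputable def Dt (L : Fin N → Fin N → Fin N → (Fin N → ℝ) → ℝ)
    (s2 s3 : ℝ) (σ : Fin N → (Fin N → ℝ) → ℝ)
    (F : Fin N → Fin N → (Fin N → ℝ) → ℝ)
    (σ2 : Fin N → Fin N → (Fin N → ℝ) → ℝ)
    (φ : Fin N → (Fin N → ℝ) → ℝ) (i j m n : Fin N) (x : Fin N → ℝ) : ℝ :=
  s2 ^ 2 * (F i n x * (∑ α, (F α m x * σ j x + F α j x * σ m x) * σ α x)
      + (∑ α, F i α x * F α m x) * σ j x * σ n x)
    + s3 ^ 2 * σ2 j m x * (∑ α, σ2 α n x * φ α x) * φ i x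
    + s2 * s3 * ((∑ α, (F α m x * σ j x + F α j x * σ m x) * σ2 α n x) * φ i x
      - (∑ α, (F i m x * σ α x + F i α x * σ m x) * φ α x) * σ2 j n x)
    - s2 * cov12 L (fun i j m x => F i j x * σ m x + F i m x * σ j x) i j m n x
    - s3 * cov12 L (fun i j m x => σ2 j m x * φ i x) i j m n x

/-- The Thomas projective parameter of `L`. -/
noncomputable def thomas (L : Fin N → Fin N → Fin N → (Fin N → ℝ) → ℝ)
    (i j k : Fin N) (x : Fin N → ℝ) : ℝ :=
  L i j k x - (1 / ((N : ℝ) + 1)) *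
    (kd i k * (∑ α, L α j α x) + kd i j * (∑ α, L α k α x))

/-- The Weyl projective tensor of `L`. -/
noncomputable def weyl (L : Fin N → Fin N → Fin N → (Fin N → ℝ) → ℝ)
    (i j m n : Fin N) (x : Fin N → ℝ) : ℝ :=
  curv L i j m n x + (1 / ((N : ℝ) + 1)) * kd i j * (ricci L m n x - ricci L n m x)
    + ((N : ℝ) / ((N : ℝ) ^ 2 - 1)) * (kd i m * ricci L j n x - kd i n * ricci L j m x)
    + (1 / ((N : ℝ) ^ 2 - 1)) * (kd i m * ricci L n j x - kd i n * ricci L m j x)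

/-- The derived associated Thomas-type object `T̃^{(s)i}_{jk}`. -/
noncomputable def dThomas (L : Fin N → Fin N → Fin N → (Fin N → ℝ) → ℝ)
    (s1 s2 s3 : ℝ) (σ : Fin N → (Fin N → ℝ) → ℝ)
    (F : Fin N → Fin N → (Fin N → ℝ) → ℝ)
    (σ2 : Fin N → Fin N → (Fin N → ℝ) → ℝ)
    (φ : Fin N → (Fin N → ℝ) → ℝ) (i j k : Fin N) (x : Fin N → ℝ) : ℝ :=
  L i j k x
    - (s1 / ((N : ℝ) + 1)) * kd i j * ((∑ α, L α k α x)
        - s2 * ((∑ α, F α k x * σ α x) + (∑ α, F α α x) * σ k x)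
        - s3 * (∑ α, σ2 k α x * φ α x))
    - (s1 / ((N : ℝ) + 1)) * kd i k * ((∑ α, L α j α x)
        - s2 * ((∑ α, F α j x * σ α x) + (∑ α, F α α x) * σ j x)
        - s3 * (∑ α, σ2 j α x * φ α x))
    - s2 * (F i j x * σ k x + F i k x * σ j x) - s3 * σ2 j k x * φ i x

/-- The derived associated Weyl-type object `W^{(s)i}_{jmn}`. -/
noncomputable def dWeyl (L : Fin N → Fin N → Fin N → (Fin N → ℝ) → ℝ)
    (s2 s3 : ℝ) (σ : Fin N → (Fin N → ℝ) → ℝ)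
    (F : Fin N → Fin N → (Fin N → ℝ) → ℝ)
    (σ2 : Fin N → Fin N → (Fin N → ℝ) → ℝ)
    (φ : Fin N → (Fin N → ℝ) → ℝ) (i j m n : Fin N) (x : Fin N → ℝ) : ℝ :=
  curv L i j m n x + (1 / ((N : ℝ) + 1)) * kd i j * (ricci L m n x - ricci L n m x)
    + ((N : ℝ) / ((N : ℝ) ^ 2 - 1)) * (kd i m * ricci L j n x - kd i n * ricci L j m x)
    + (1 / ((N : ℝ) ^ 2 - 1)) * (kd i m * ricci L n j x - kd i n * ricci L m j x)
    + Dt L s2 s3 σ F σ2 φ i j m n x - Dt L s2 s3 σ F σ2 φ i j n m x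

/-- The object `W^{(s).[2].i}_{jmn}`. -/
noncomputable def W2 (L : Fin N → Fin N → Fin N → (Fin N → ℝ) → ℝ)
    (s2 s3 : ℝ) (σ : Fin N → (Fin N → ℝ) → ℝ)
    (F : Fin N → Fin N → (Fin N → ℝ) → ℝ)
    (σ2 : Fin N → Fin N → (Fin N → ℝ) → ℝ)
    (φ : Fin N → (Fin N → ℝ) → ℝ) (i j m n : Fin N) (x : Fin N → ℝ) : ℝ :=
  dWeyl L s2 s3 σ F σ2 φ i j m n x
    + (1 / ((N : ℝ) - 1)) *
      (kd i m * ((∑ α, Dt L s2 s3 σ F σ2 φ α j n α x)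
          - (∑ α, Dt L s2 s3 σ F σ2 φ α j α n x))
        - kd i n * ((∑ α, Dt L s2 s3 σ F σ2 φ α j m α x)
          - (∑ α, Dt L s2 s3 σ F σ2 φ α j α m x)))


section Aux

variable {N : ℕ}

lemma pd_add {f g : (Fin N → ℝ) → ℝ} {x : Fin N → ℝ} (hf : DifferentiableAt ℝ f x)
    (hg : DifferentiableAt ℝ g x) (k : Fin N) :
    pd k (fun y => f y + g y) x = pd k f x + pd k g x := by
  simp [pd, fderiv_fun_add hf hg]

lemma pd_sub {f g : (Fin N → ℝ) → ℝ} {x : Fin N → ℝ} (hf : DifferentiableAt ℝ f x)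
    (hg : DifferentiableAt ℝ g x) (k : Fin N) :
    pd k (fun y => f y - g y) x = pd k f x - pd k g x := by
  simp [pd, fderiv_fun_sub hf hg]

lemma pd_mul {f g : (Fin N → ℝ) → ℝ} {x : Fin N → ℝ} (hf : DifferentiableAt ℝ f x)
    (hg : DifferentiableAt ℝ g x) (k : Fin N) :
    pd k (fun y => f y * g y) x = f x * pd k g x + g x * pd k f x := by
  simp [pd, fderiv_fun_mul hf hg]

lemma pd_const_mul {f : (Fin N → ℝ) → ℝ} {x : Fin N → ℝ} (hf : DifferentiableAt ℝ f x)
    (c : ℝ) (k : Fin N) :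
    pd k (fun y => c * f y) x = c * pd k f x := by
  simp [pd, fderiv_const_mul hf]

lemma sum_ite_pull {c : Prop} [Decidable c] (f g : Fin N → ℝ) :
    (∑ α, if c then f α else g α) = if c then ∑ α, f α else ∑ α, g α := by
  split <;> rfl

set_option maxHeartbeats 8000000 in
/-- Main computation: the Weyl-type combination equals the curvature of `L - ω`. -/
lemma key (L : Fin N → Fin N → Fin N → (Fin N → ℝ) → ℝ)
    (hL : ∀ i j k, Differentiable ℝ (L i j k))
    (hLsym : ∀ i j k, L i j k = L i k j)
    (s1 s2 s3 : ℝ)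
    (ρ σ φ : Fin N → (Fin N → ℝ) → ℝ)
    (F σ2 : Fin N → Fin N → (Fin N → ℝ) → ℝ)
    (hρ : ∀ j, Differentiable ℝ (ρ j)) (hσ : ∀ j, Differentiable ℝ (σ j))
    (hφ : ∀ j, Differentiable ℝ (φ j))
    (hF : ∀ i j, Differentiable ℝ (F i j)) (hσ2 : ∀ i j, Differentiable ℝ (σ2 i j))
    (hσ2sym : ∀ j k, σ2 j k = σ2 k j)
    (i j m n : Fin N) (x : Fin N → ℝ) :
    curv L i j m n x
      - kd i j * (zeta L s1 s2 s3 ρ σ F σ2 φ m n x - zeta L s1 s2 s3 ρ σ F σ2 φ n m x)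
      - kd i m * zeta L s1 s2 s3 ρ σ F σ2 φ j n x
      + kd i n * zeta L s1 s2 s3 ρ σ F σ2 φ j m x
      + Dt L s2 s3 σ F σ2 φ i j m n x - Dt L s2 s3 σ F σ2 φ i j n m x
    = curv (fun p q r y => L p q r y
        - (s1 * (kd p q * ρ r y + kd p r * ρ q y)
          + s2 * (F p q y * σ r y + F p r y * σ q y) + s3 * σ2 q r y * φ p y))
        i j m n x := by
  have hA : ∀ (a b c d : Fin N),
      pd d (fun y => F a b y * σ c y + F a c y * σ b y) x
        = F a b x * pd d (σ c) x + σ c x * pd d (F a b) x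
          + (F a c x * pd d (σ b) x + σ b x * pd d (F a c) x) := by
    intro a b c d
    rw [pd_add (by fun_prop) (by fun_prop) d, pd_mul ((hF a b) x) ((hσ c) x) d,
      pd_mul ((hF a c) x) ((hσ b) x) d]
  have hB : ∀ (a b c d : Fin N),
      pd d (fun y => σ2 b c y * φ a y) x
        = σ2 b c x * pd d (φ a) x + φ a x * pd d (σ2 b c) x := by
    intro a b c d
    rw [pd_mul ((hσ2 b c) x) ((hφ a) x) d]
  have hM : ∀ (a b c d : Fin N),
      pd d (fun y => L a b c y
          - (s1 * (kd a b * ρ c y + kd a c * ρ b y)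
            + s2 * (F a b y * σ c y + F a c y * σ b y) + s3 * σ2 b c y * φ a y)) x
        = pd d (L a b c) x
          - (s1 * (kd a b * pd d (ρ c) x + kd a c * pd d (ρ b) x)
            + s2 * (F a b x * pd d (σ c) x + σ c x * pd d (F a b) x
              + (F a c x * pd d (σ b) x + σ b x * pd d (F a c) x))
            + (s3 * σ2 b c x * pd d (φ a) x + φ a x * (s3 * pd d (σ2 b c) x))) := by
    intro a b c d
    rw [pd_sub ((hL a b c) x) (by fun_prop) d, pd_add (by fun_prop) (by fun_prop) d,
      pd_add (by fun_prop) (by fun_prop) d,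
      pd_const_mul (by fun_prop) s1 d,
      pd_add (by fun_prop) (by fun_prop) d,
      pd_const_mul ((hρ c) x) (kd a b) d, pd_const_mul ((hρ b) x) (kd a c) d,
      pd_const_mul (by fun_prop) s2 d, hA a b c d,
      pd_mul (f := fun y => s3 * σ2 b c y) (by fun_prop) ((hφ a) x) d]
    try rw [pd_const_mul ((hσ2 b c) x) s3 d]
    try ring
  simp only [curv, zeta, Dt, cov1, cov12]
  simp only [hM, hA, hB]
  simp only [hσ2sym n m, hσ2sym n j, hσ2sym m j,
    show ∀ p, L p n m = L p m n from fun p => hLsym p n m,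
    show ∀ p, L p n j = L p j n from fun p => hLsym p n j,
    show ∀ p, L p m j = L p j m from fun p => hLsym p m j]
  simp only [kd, mul_ite, ite_mul, mul_zero, zero_mul, mul_one, one_mul,
    mul_add, add_mul, mul_sub, sub_mul, Finset.sum_add_distrib,
    Finset.sum_sub_distrib, Finset.mul_sum, Finset.sum_mul, sum_ite_pull,
    Finset.sum_ite_eq, Finset.sum_ite_eq', Finset.mem_univ, if_true, pow_two,
    Finset.sum_const_zero]
  split_ifs <;> subst_vars
  all_goals try ring
  all_goals try simp only [hσ2sym n m]
  all_goals try simp only [hσ2sym n j]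
  all_goals try simp only [hσ2sym m j]
  all_goals try simp only [show ∀ p, L p n m = L p m n from fun p => hLsym p n m]
  all_goals try simp only [show ∀ p, L p n j = L p j n from fun p => hLsym p n j]
  all_goals try simp only [show ∀ p, L p m j = L p j m from fun p => hLsym p m j]
  all_goals try simp only [Finset.sum_const_zero, pow_two, mul_comm, mul_left_comm, mul_assoc]
  all_goals try ring

end Aux

set_option maxHeartbeats 8000000 in
theorem statement_1
    (N : ℕ) (hN : 2 ≤ N)
    (L Lb : Fin N → Fin N → Fin N → (Fin N → ℝ) → ℝ)
    (hL : ∀ i j k, ContDiff ℝ (⊤ : ℕ∞) (L i j k))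
    (hLb : ∀ i j k, ContDiff ℝ (⊤ : ℕ∞) (Lb i j k))
    (hLsym : ∀ i j k, L i j k = L i k j)
    (hLbsym : ∀ i j k, Lb i j k = Lb i k j)
    (s1 s2 s3 : ℝ)
    (ρ σ φ ρb σb φb : Fin N → (Fin N → ℝ) → ℝ)
    (F σ2 Fb σ2b : Fin N → Fin N → (Fin N → ℝ) → ℝ)
    (hρ : ∀ j, ContDiff ℝ (⊤ : ℕ∞) (ρ j)) (hσ : ∀ j, ContDiff ℝ (⊤ : ℕ∞) (σ j))
    (hφ : ∀ j, ContDiff ℝ (⊤ : ℕ∞) (φ j))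
    (hρb : ∀ j, ContDiff ℝ (⊤ : ℕ∞) (ρb j)) (hσb : ∀ j, ContDiff ℝ (⊤ : ℕ∞) (σb j))
    (hφb : ∀ j, ContDiff ℝ (⊤ : ℕ∞) (φb j))
    (hF : ∀ i j, ContDiff ℝ (⊤ : ℕ∞) (F i j)) (hσ2 : ∀ i j, ContDiff ℝ (⊤ : ℕ∞) (σ2 i j))
    (hFb : ∀ i j, ContDiff ℝ (⊤ : ℕ∞) (Fb i j)) (hσ2b : ∀ i j, ContDiff ℝ (⊤ : ℕ∞) (σ2b i j))
    (hσ2sym : ∀ j k, σ2 j k = σ2 k j) (hσ2bsym : ∀ j k, σ2b j k = σ2b k j)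
    (hmap : ∀ i j k x, Lb i j k x = L i j k x
      + omg s1 s2 s3 ρb σb Fb σ2b φb i j k x - omg s1 s2 s3 ρ σ F σ2 φ i j k x) :
    ∀ i j m n x,
      curv Lb i j m n x
        - kd i j * (zeta Lb s1 s2 s3 ρb σb Fb σ2b φb m n x
            - zeta Lb s1 s2 s3 ρb σb Fb σ2b φb n m x)
        - kd i m * zeta Lb s1 s2 s3 ρb σb Fb σ2b φb j n x
        + kd i n * zeta Lb s1 s2 s3 ρb σb Fb σ2b φb j m x
        + Dt Lb s2 s3 σb Fb σ2b φb i j m n x - Dt Lb s2 s3 σb Fb σ2b φb i j n m x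
      = curv L i j m n x
        - kd i j * (zeta L s1 s2 s3 ρ σ F σ2 φ m n x
            - zeta L s1 s2 s3 ρ σ F σ2 φ n m x)
        - kd i m * zeta L s1 s2 s3 ρ σ F σ2 φ j n x
        + kd i n * zeta L s1 s2 s3 ρ σ F σ2 φ j m x
        + Dt L s2 s3 σ F σ2 φ i j m n x - Dt L s2 s3 σ F σ2 φ i j n m x     := by
  intro i j m n x
  have DL : ∀ a b c, Differentiable ℝ (L a b c) := fun a b c => (hL a b c).differentiable (by simp)
  have DLb : ∀ a b c, Differentiable ℝ (Lb a b c) := fun a b c => (hLb a b c).differentiable (by simp)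
  have Dρ : ∀ a, Differentiable ℝ (ρ a) := fun a => (hρ a).differentiable (by simp)
  have Dσ : ∀ a, Differentiable ℝ (σ a) := fun a => (hσ a).differentiable (by simp)
  have Dφ : ∀ a, Differentiable ℝ (φ a) := fun a => (hφ a).differentiable (by simp)
  have Dρb : ∀ a, Differentiable ℝ (ρb a) := fun a => (hρb a).differentiable (by simp)
  have Dσb : ∀ a, Differentiable ℝ (σb a) := fun a => (hσb a).differentiable (by simp)
  have Dφb : ∀ a, Differentiable ℝ (φb a) := fun a => (hφb a).differentiable (by simp)
  have DF : ∀ a b, Differentiable ℝ (F a b) := fun a b => (hF a b).differentiable (by simp)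
  have Dσ2 : ∀ a b, Differentiable ℝ (σ2 a b) := fun a b => (hσ2 a b).differentiable (by simp)
  have DFb : ∀ a b, Differentiable ℝ (Fb a b) := fun a b => (hFb a b).differentiable (by simp)
  have Dσ2b : ∀ a b, Differentiable ℝ (σ2b a b) := fun a b => (hσ2b a b).differentiable (by simp)
  rw [key Lb DLb hLbsym s1 s2 s3 ρb σb φb Fb σ2b Dρb Dσb Dφb DFb Dσ2b hσ2bsym i j m n x,
    key L DL hLsym s1 s2 s3 ρ σ φ F σ2 Dρ Dσ Dφ DF Dσ2 hσ2sym i j m n x]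
  have hfun : (fun p q r y => Lb p q r y
        - (s1 * (kd p q * ρb r y + kd p r * ρb q y)
          + s2 * (Fb p q y * σb r y + Fb p r y * σb q y) + s3 * σ2b q r y * φb p y))
      = (fun p q r y => L p q r y
        - (s1 * (kd p q * ρ r y + kd p r * ρ q y)
          + s2 * (F p q y * σ r y + F p r y * σ q y) + s3 * σ2 q r y * φ p y)) := by
    funext p q r y
    have h := hmap p q r y
    simp only [omg] at h
    linarith
  rw [hfun]


end PaperInv
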